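/- arXiv:2503.19541 — 3 statements merged into one kernel-verified Lean document; each statement's English description precedes it below -/
import Mathlib

section
/- If a smooth function φ on Minkowski space (with flat wave operator □ = -∂_T² + ∂_R² + (2/R)∂_R + angular Laplacian terms) satisfies the ugly equation □φ = (2/R)∂_T φ + F, then the rescaled incoming-null derivative ψ̱φ := R(∂_T - ∂_R)φ satisfies the wave equation with source: □(R(∂_T - ∂_R)φ) = (1/R)(∂_T - ∂_R)(R²F). -/
/-!
STATEMENT 0: If a smooth function `φ` on Minkowski space (flat wave operator
`□ = -∂_T² + ∂_R² + (2/R)∂_R + R⁻²Δ_{S²}` in spherical coordinates `(T,R,θ,φ)`)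
satisfies the ugly equation `□φ = (2/R)∂_T φ + F`, then
`□(R(∂_T - ∂_R)φ) = (1/R)(∂_T - ∂_R)(R²F)` wherever `R > 0` (and `sin θ ≠ 0`,
so that the spherical operators are defined).
-/

noncomputable section

/-- `∂_T` of a function of `(T, R, θ, φ)`. -/
def dT (f : ℝ → ℝ → ℝ → ℝ → ℝ) : ℝ → ℝ → ℝ → ℝ → ℝ :=
  fun T R a b => deriv (fun s => f s R a b) T

/-- `∂_R`. -/
def dR (f : ℝ → ℝ → ℝ → ℝ → ℝ) : ℝ → ℝ → ℝ → ℝ → ℝ :=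
  fun T R a b => deriv (fun s => f T s a b) R

/-- `∂_θ`. -/
def dA (f : ℝ → ℝ → ℝ → ℝ → ℝ) : ℝ → ℝ → ℝ → ℝ → ℝ :=
  fun T R a b => deriv (fun s => f T R s b) a

/-- `∂_φ`. -/
def dB (f : ℝ → ℝ → ℝ → ℝ → ℝ) : ℝ → ℝ → ℝ → ℝ → ℝ :=
  fun T R a b => deriv (fun s => f T R a s) b

/-- Laplacian on the unit round sphere in coordinates `(θ, φ)`:
`Δ_{S²}u = ∂_θ²u + cot θ ∂_θ u + (1/sin²θ) ∂_φ² u`. -/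
def lapS2 (f : ℝ → ℝ → ℝ → ℝ → ℝ) : ℝ → ℝ → ℝ → ℝ → ℝ :=
  fun T R a b => dA (dA f) T R a b + (Real.cos a / Real.sin a) * dA f T R a b
    + ((Real.sin a) ^ 2)⁻¹ * dB (dB f) T R a b

/-- Flat wave operator `□u = -∂_T²u + ∂_R²u + (2/R)∂_R u + R⁻² Δ_{S²} u`. -/
def box (f : ℝ → ℝ → ℝ → ℝ → ℝ) : ℝ → ℝ → ℝ → ℝ → ℝ :=
  fun T R a b => -dT (dT f) T R a b + dR (dR f) T R a b + (2 / R) * dR f T R a b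
    + (R ^ 2)⁻¹ * lapS2 f T R a b

/-- Smoothness of a function of `(T,R,θ,φ)`. -/
def smoothFn (f : ℝ → ℝ → ℝ → ℝ → ℝ) : Prop :=
  ContDiff ℝ (⊤ : ℕ∞) (fun q : ℝ × ℝ × ℝ × ℝ => f q.1 q.2.1 q.2.2.1 q.2.2.2)

namespace Aux


abbrev E4 := ℝ × ℝ × ℝ × ℝ

def unc (f : ℝ → ℝ → ℝ → ℝ → ℝ) : E4 → ℝ := fun q => f q.1 q.2.1 q.2.2.1 q.2.2.2

def vT : E4 := (1,0,0,0)
def vR : E4 := (0,1,0,0)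
def vA : E4 := (0,0,1,0)
def vB : E4 := (0,0,0,1)

lemma curveT (R a b : ℝ) (T : ℝ) : HasDerivAt (fun s : ℝ => ((s, R, a, b) : E4)) vT T := by
  have h := (hasDerivAt_id T).prodMk (hasDerivAt_const T ((R, a, b) : ℝ × ℝ × ℝ))
  simpa [vT, Prod.mk_zero_zero] using h

lemma curveR (T a b : ℝ) (R : ℝ) : HasDerivAt (fun s : ℝ => ((T, s, a, b) : E4)) vR R := by
  have h := (hasDerivAt_const R T).prodMk ((hasDerivAt_id R).prodMk (hasDerivAt_const R ((a, b) : ℝ × ℝ)))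
  simpa [vR, Prod.mk_zero_zero] using h

lemma curveA (T R b : ℝ) (a : ℝ) : HasDerivAt (fun s : ℝ => ((T, R, s, b) : E4)) vA a := by
  have h := (hasDerivAt_const a T).prodMk ((hasDerivAt_const a R).prodMk ((hasDerivAt_id a).prodMk (hasDerivAt_const a b)))
  simpa [vA, Prod.mk_zero_zero] using h

lemma curveB (T R a : ℝ) (b : ℝ) : HasDerivAt (fun s : ℝ => ((T, R, a, s) : E4)) vB b := by
  have h := (hasDerivAt_const b T).prodMk ((hasDerivAt_const b R).prodMk ((hasDerivAt_const b a).prodMk (hasDerivAt_id b)))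
  simpa [vB, Prod.mk_zero_zero] using h

variable {f : ℝ → ℝ → ℝ → ℝ → ℝ}

lemma hdT (hf : smoothFn f) (T R a b : ℝ) :
    HasDerivAt (fun s => f s R a b) (fderiv ℝ (unc f) (T, R, a, b) vT) T :=
  by have h := ((hf.differentiable (by simp) (T, R, a, b)).hasFDerivAt).comp_hasDerivAt T (curveT R a b T); exact h

lemma hdR (hf : smoothFn f) (T R a b : ℝ) :
    HasDerivAt (fun s => f T s a b) (fderiv ℝ (unc f) (T, R, a, b) vR) R :=
  by have h := ((hf.differentiable (by simp) (T, R, a, b)).hasFDerivAt).comp_hasDerivAt R (curveR T a b R); exact h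

lemma hdA (hf : smoothFn f) (T R a b : ℝ) :
    HasDerivAt (fun s => f T R s b) (fderiv ℝ (unc f) (T, R, a, b) vA) a :=
  by have h := ((hf.differentiable (by simp) (T, R, a, b)).hasFDerivAt).comp_hasDerivAt a (curveA T R b a); exact h

lemma hdB (hf : smoothFn f) (T R a b : ℝ) :
    HasDerivAt (fun s => f T R a s) (fderiv ℝ (unc f) (T, R, a, b) vB) b :=
  by have h := ((hf.differentiable (by simp) (T, R, a, b)).hasFDerivAt).comp_hasDerivAt b (curveB T R a b); exact h

lemma dT_eq (hf : smoothFn f) (T R a b : ℝ) :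
    dT f T R a b = fderiv ℝ (unc f) (T, R, a, b) vT := (hdT hf T R a b).deriv
lemma dR_eq (hf : smoothFn f) (T R a b : ℝ) :
    dR f T R a b = fderiv ℝ (unc f) (T, R, a, b) vR := (hdR hf T R a b).deriv
lemma dA_eq (hf : smoothFn f) (T R a b : ℝ) :
    dA f T R a b = fderiv ℝ (unc f) (T, R, a, b) vA := (hdA hf T R a b).deriv
lemma dB_eq (hf : smoothFn f) (T R a b : ℝ) :
    dB f T R a b = fderiv ℝ (unc f) (T, R, a, b) vB := (hdB hf T R a b).deriv

/-- slices: HasDerivAt with value the named partial derivative -/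
lemma sliceT (hf : smoothFn f) (T R a b : ℝ) :
    HasDerivAt (fun s => f s R a b) (dT f T R a b) T := by
  rw [dT_eq hf]; exact hdT hf T R a b
lemma sliceR (hf : smoothFn f) (T R a b : ℝ) :
    HasDerivAt (fun s => f T s a b) (dR f T R a b) R := by
  rw [dR_eq hf]; exact hdR hf T R a b
lemma sliceA (hf : smoothFn f) (T R a b : ℝ) :
    HasDerivAt (fun s => f T R s b) (dA f T R a b) a := by
  rw [dA_eq hf]; exact hdA hf T R a b
lemma sliceB (hf : smoothFn f) (T R a b : ℝ) :
    HasDerivAt (fun s => f T R a s) (dB f T R a b) b := by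
  rw [dB_eq hf]; exact hdB hf T R a b

lemma smooth_pd (hf : smoothFn f) (v : E4) :
    ContDiff ℝ (⊤ : ℕ∞) (fun q : E4 => fderiv ℝ (unc f) q v) :=
  (hf.fderiv_right (by simp)).clm_apply contDiff_const

lemma smooth_dT (hf : smoothFn f) : smoothFn (dT f) := by
  have : (fun q : E4 => dT f q.1 q.2.1 q.2.2.1 q.2.2.2)
      = fun q : E4 => fderiv ℝ (unc f) q vT := funext fun q => dT_eq hf q.1 q.2.1 q.2.2.1 q.2.2.2
  rw [smoothFn, this]; exact smooth_pd hf vT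
lemma smooth_dR (hf : smoothFn f) : smoothFn (dR f) := by
  have : (fun q : E4 => dR f q.1 q.2.1 q.2.2.1 q.2.2.2)
      = fun q : E4 => fderiv ℝ (unc f) q vR := funext fun q => dR_eq hf q.1 q.2.1 q.2.2.1 q.2.2.2
  rw [smoothFn, this]; exact smooth_pd hf vR
lemma smooth_dA (hf : smoothFn f) : smoothFn (dA f) := by
  have : (fun q : E4 => dA f q.1 q.2.1 q.2.2.1 q.2.2.2)
      = fun q : E4 => fderiv ℝ (unc f) q vA := funext fun q => dA_eq hf q.1 q.2.1 q.2.2.1 q.2.2.2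
  rw [smoothFn, this]; exact smooth_pd hf vA
lemma smooth_dB (hf : smoothFn f) : smoothFn (dB f) := by
  have : (fun q : E4 => dB f q.1 q.2.1 q.2.2.1 q.2.2.2)
      = fun q : E4 => fderiv ℝ (unc f) q vB := funext fun q => dB_eq hf q.1 q.2.1 q.2.2.1 q.2.2.2
  rw [smoothFn, this]; exact smooth_pd hf vB

lemma pd_comm (hf : smoothFn f) (v w : E4) (x : E4) :
    fderiv ℝ (fun q => fderiv ℝ (unc f) q v) x w
      = fderiv ℝ (fun q => fderiv ℝ (unc f) q w) x v := by
  have hsym : IsSymmSndFDerivAt ℝ (unc f) x :=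
    (hf.contDiffAt).isSymmSndFDerivAt (by simp; exact WithTop.coe_le_coe.mpr le_top)
  have hd : DifferentiableAt ℝ (fderiv ℝ (unc f)) x :=
    ((hf.fderiv_right (m := (⊤ : ℕ∞)) (by simp)).differentiable (by simp)) x
  rw [fderiv_clm_apply hd (differentiableAt_const v),
      fderiv_clm_apply hd (differentiableAt_const w)]
  simp [hsym.eq v w]

/-- generic commutation: if d₁, d₂ are two of the coordinate partials, they commute on smooth f -/
lemma comm_gen (hf : smoothFn f) (v w : E4)
    (d₁ d₂ : (ℝ → ℝ → ℝ → ℝ → ℝ) → ℝ → ℝ → ℝ → ℝ → ℝ)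
    (h₁ : ∀ g, smoothFn g → ∀ T R a b, d₁ g T R a b = fderiv ℝ (unc g) (T,R,a,b) v)
    (h₂ : ∀ g, smoothFn g → ∀ T R a b, d₂ g T R a b = fderiv ℝ (unc g) (T,R,a,b) w)
    (s₁ : ∀ g, smoothFn g → smoothFn (d₁ g)) (s₂ : ∀ g, smoothFn g → smoothFn (d₂ g))
    (T R a b : ℝ) :
    d₁ (d₂ f) T R a b = d₂ (d₁ f) T R a b := by
  rw [h₁ _ (s₂ f hf), h₂ _ (s₁ f hf)]
  rw [show unc (d₂ f) = fun q : E4 => fderiv ℝ (unc f) q w from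
        funext fun q => h₂ f hf q.1 q.2.1 q.2.2.1 q.2.2.2,
      show unc (d₁ f) = fun q : E4 => fderiv ℝ (unc f) q v from
        funext fun q => h₁ f hf q.1 q.2.1 q.2.2.1 q.2.2.2]
  exact pd_comm hf w v (T,R,a,b)

lemma dT_dR_comm (hf : smoothFn f) (T R a b : ℝ) : dT (dR f) T R a b = dR (dT f) T R a b :=
  comm_gen hf vT vR dT dR (fun _ h => dT_eq h) (fun _ h => dR_eq h)
    (fun _ h => smooth_dT h) (fun _ h => smooth_dR h) T R a b
lemma dT_dA_comm (hf : smoothFn f) (T R a b : ℝ) : dT (dA f) T R a b = dA (dT f) T R a b :=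
  comm_gen hf vT vA dT dA (fun _ h => dT_eq h) (fun _ h => dA_eq h)
    (fun _ h => smooth_dT h) (fun _ h => smooth_dA h) T R a b
lemma dT_dB_comm (hf : smoothFn f) (T R a b : ℝ) : dT (dB f) T R a b = dB (dT f) T R a b :=
  comm_gen hf vT vB dT dB (fun _ h => dT_eq h) (fun _ h => dB_eq h)
    (fun _ h => smooth_dT h) (fun _ h => smooth_dB h) T R a b
lemma dR_dA_comm (hf : smoothFn f) (T R a b : ℝ) : dR (dA f) T R a b = dA (dR f) T R a b :=
  comm_gen hf vR vA dR dA (fun _ h => dR_eq h) (fun _ h => dA_eq h)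
    (fun _ h => smooth_dR h) (fun _ h => smooth_dA h) T R a b
lemma dR_dB_comm (hf : smoothFn f) (T R a b : ℝ) : dR (dB f) T R a b = dB (dR f) T R a b :=
  comm_gen hf vR vB dR dB (fun _ h => dR_eq h) (fun _ h => dB_eq h)
    (fun _ h => smooth_dR h) (fun _ h => smooth_dB h) T R a b


variable {f g : ℝ → ℝ → ℝ → ℝ → ℝ}

lemma smooth_sub (hf : smoothFn f) (hg : smoothFn g) :
    smoothFn (fun T R a b => f T R a b - g T R a b) := ContDiff.sub hf hg

-- function-level commutation
lemma dT_dA_comm' (hf : smoothFn f) : dT (dA f) = dA (dT f) := by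
  funext T R a b; exact dT_dA_comm hf T R a b
lemma dT_dB_comm' (hf : smoothFn f) : dT (dB f) = dB (dT f) := by
  funext T R a b; exact dT_dB_comm hf T R a b
lemma dT_dR_comm' (hf : smoothFn f) : dT (dR f) = dR (dT f) := by
  funext T R a b; exact dT_dR_comm hf T R a b
lemma dR_dA_comm' (hf : smoothFn f) : dR (dA f) = dA (dR f) := by
  funext T R a b; exact dR_dA_comm hf T R a b
lemma dR_dB_comm' (hf : smoothFn f) : dR (dB f) = dB (dR f) := by
  funext T R a b; exact dR_dB_comm hf T R a b

/-- T-slice of the spherical Laplacian. -/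
lemma lap_sliceT (hf : smoothFn f) (T R a b : ℝ) :
    HasDerivAt (fun s => lapS2 f s R a b) (lapS2 (dT f) T R a b) T := by
  have h := ((sliceT (smooth_dA (smooth_dA hf)) T R a b).add
      ((sliceT (smooth_dA hf) T R a b).const_mul (Real.cos a / Real.sin a))).add
      ((sliceT (smooth_dB (smooth_dB hf)) T R a b).const_mul (((Real.sin a) ^ 2)⁻¹))
  have hval : lapS2 (dT f) T R a b =
      dT (dA (dA f)) T R a b + Real.cos a / Real.sin a * dT (dA f) T R a b
        + ((Real.sin a) ^ 2)⁻¹ * dT (dB (dB f)) T R a b := by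
    simp only [lapS2]
    rw [dT_dA_comm (smooth_dA hf), dT_dA_comm' hf,
        dT_dB_comm (smooth_dB hf), dT_dB_comm' hf]
  rw [hval]
  exact h
/-- R-slice of the spherical Laplacian. -/
lemma lap_sliceR (hf : smoothFn f) (T R a b : ℝ) :
    HasDerivAt (fun s => lapS2 f T s a b) (lapS2 (dR f) T R a b) R := by
  have h := ((sliceR (smooth_dA (smooth_dA hf)) T R a b).add
      ((sliceR (smooth_dA hf) T R a b).const_mul (Real.cos a / Real.sin a))).add
      ((sliceR (smooth_dB (smooth_dB hf)) T R a b).const_mul (((Real.sin a) ^ 2)⁻¹))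
  have hval : lapS2 (dR f) T R a b =
      dR (dA (dA f)) T R a b + Real.cos a / Real.sin a * dR (dA f) T R a b
        + ((Real.sin a) ^ 2)⁻¹ * dR (dB (dB f)) T R a b := by
    simp only [lapS2]
    rw [dR_dA_comm (smooth_dA hf), dR_dA_comm' hf,
        dR_dB_comm (smooth_dB hf), dR_dB_comm' hf]
  rw [hval]
  exact h

-- point-level linearity of the operators on differences
lemma dT_sub (hf : smoothFn f) (hg : smoothFn g) (T R a b : ℝ) :
    dT (fun T R a b => f T R a b - g T R a b) T R a b = dT f T R a b - dT g T R a b :=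
  ((sliceT hf T R a b).sub (sliceT hg T R a b)).deriv
lemma dR_sub (hf : smoothFn f) (hg : smoothFn g) (T R a b : ℝ) :
    dR (fun T R a b => f T R a b - g T R a b) T R a b = dR f T R a b - dR g T R a b :=
  ((sliceR hf T R a b).sub (sliceR hg T R a b)).deriv
lemma dA_sub (hf : smoothFn f) (hg : smoothFn g) (T R a b : ℝ) :
    dA (fun T R a b => f T R a b - g T R a b) T R a b = dA f T R a b - dA g T R a b :=
  ((sliceA hf T R a b).sub (sliceA hg T R a b)).deriv
lemma dB_sub (hf : smoothFn f) (hg : smoothFn g) (T R a b : ℝ) :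
    dB (fun T R a b => f T R a b - g T R a b) T R a b = dB f T R a b - dB g T R a b :=
  ((sliceB hf T R a b).sub (sliceB hg T R a b)).deriv

lemma lapS2_sub (hf : smoothFn f) (hg : smoothFn g) (T R a b : ℝ) :
    lapS2 (fun T R a b => f T R a b - g T R a b) T R a b
      = lapS2 f T R a b - lapS2 g T R a b := by
  have h1 : dA (dA fun T R a b => f T R a b - g T R a b) T R a b
      = dA (dA f) T R a b - dA (dA g) T R a b := by
    have hfun : (fun s => dA (fun T R a b => f T R a b - g T R a b) T R s b)
        = fun s => dA f T R s b - dA g T R s b := funext fun s => dA_sub hf hg T R s b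
    show deriv _ a = _
    rw [hfun]
    exact ((sliceA (smooth_dA hf) T R a b).sub (sliceA (smooth_dA hg) T R a b)).deriv
  have h2 : dB (dB fun T R a b => f T R a b - g T R a b) T R a b
      = dB (dB f) T R a b - dB (dB g) T R a b := by
    have hfun : (fun s => dB (fun T R a b => f T R a b - g T R a b) T R a s)
        = fun s => dB f T R a s - dB g T R a s := funext fun s => dB_sub hf hg T R a s
    show deriv _ b = _
    rw [hfun]
    exact ((sliceB (smooth_dB hf) T R a b).sub (sliceB (smooth_dB hg) T R a b)).deriv
  simp only [lapS2, h1, h2, dA_sub hf hg]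
  ring

-- product rules for the rescaling by R
lemma dT_rescale (g : ℝ → ℝ → ℝ → ℝ → ℝ) (T R a b : ℝ) :
    dT (fun T' R' a' b' => R' * g T' R' a' b') T R a b = R * dT g T R a b := by
  show deriv (fun s => R * g s R a b) T = _
  rw [deriv_const_mul_field]
  rfl
lemma dA_rescale (g : ℝ → ℝ → ℝ → ℝ → ℝ) (T R a b : ℝ) :
    dA (fun T' R' a' b' => R' * g T' R' a' b') T R a b = R * dA g T R a b := by
  show deriv (fun s => R * g T R s b) a = _
  rw [deriv_const_mul_field]
  rfl
lemma dB_rescale (g : ℝ → ℝ → ℝ → ℝ → ℝ) (T R a b : ℝ) :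
    dB (fun T' R' a' b' => R' * g T' R' a' b') T R a b = R * dB g T R a b := by
  show deriv (fun s => R * g T R a s) b = _
  rw [deriv_const_mul_field]
  rfl
lemma dR_rescale (hg : smoothFn g) (T R a b : ℝ) :
    dR (fun T' R' a' b' => R' * g T' R' a' b') T R a b
      = g T R a b + R * dR g T R a b := by
  have h := (hasDerivAt_id R).mul (sliceR hg T R a b)
  have : dR (fun T' R' a' b' => R' * g T' R' a' b') T R a b
      = 1 * g T R a b + R * dR g T R a b := h.deriv
  rw [this]; ring

lemma dTdT_rescale (g : ℝ → ℝ → ℝ → ℝ → ℝ) (T R a b : ℝ) :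
    dT (dT fun T' R' a' b' => R' * g T' R' a' b') T R a b = R * dT (dT g) T R a b := by
  have hfun : (fun s => dT (fun T' R' a' b' => R' * g T' R' a' b') s R a b)
      = fun s => R * dT g s R a b := funext fun s => dT_rescale g s R a b
  show deriv _ T = _
  rw [hfun, deriv_const_mul_field]
  rfl
lemma dRdR_rescale (hg : smoothFn g) (T R a b : ℝ) :
    dR (dR fun T' R' a' b' => R' * g T' R' a' b') T R a b
      = 2 * dR g T R a b + R * dR (dR g) T R a b := by
  have hfun : (fun s => dR (fun T' R' a' b' => R' * g T' R' a' b') T s a b)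
      = fun s => g T s a b + s * dR g T s a b :=
    funext fun s => dR_rescale hg T s a b
  show deriv _ R = _
  rw [hfun]
  have h' : HasDerivAt (fun s => g T s a b + s * dR g T s a b)
      (dR g T R a b + (1 * dR g T R a b + R * dR (dR g) T R a b)) R :=
    (sliceR hg T R a b).add ((hasDerivAt_id R).mul (sliceR (smooth_dR hg) T R a b))
  rw [h'.deriv]; ring
lemma lap_rescale (g : ℝ → ℝ → ℝ → ℝ → ℝ) (T R a b : ℝ) :
    lapS2 (fun T' R' a' b' => R' * g T' R' a' b') T R a b = R * lapS2 g T R a b := by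
  have h1 : dA (dA fun T' R' a' b' => R' * g T' R' a' b') T R a b
      = R * dA (dA g) T R a b := by
    have hfun : (fun s => dA (fun T' R' a' b' => R' * g T' R' a' b') T R s b)
        = fun s => R * dA g T R s b := funext fun s => dA_rescale g T R s b
    show deriv _ a = _
    rw [hfun, deriv_const_mul_field]
    rfl
  have h2 : dB (dB fun T' R' a' b' => R' * g T' R' a' b') T R a b
      = R * dB (dB g) T R a b := by
    have hfun : (fun s => dB (fun T' R' a' b' => R' * g T' R' a' b') T R a s)
        = fun s => R * dB g T R a s := funext fun s => dB_rescale g T R a s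
    show deriv _ b = _
    rw [hfun, deriv_const_mul_field]
    rfl
  simp only [lapS2, h1, h2, dA_rescale]
  ring

/-- full expansion of `box` on a rescaled function -/
lemma box_rescale (hg : smoothFn g) (T R a b : ℝ) :
    box (fun T' R' a' b' => R' * g T' R' a' b') T R a b
      = -(R * dT (dT g) T R a b) + (2 * dR g T R a b + R * dR (dR g) T R a b)
        + (2 / R) * (g T R a b + R * dR g T R a b)
        + (R ^ 2)⁻¹ * (R * lapS2 g T R a b) := by
  simp only [box, dTdT_rescale, dRdR_rescale hg, dR_rescale hg, lap_rescale]


end Aux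

open Aux

theorem ugly_gives_wave_with_source (φ F : ℝ → ℝ → ℝ → ℝ → ℝ)
    (hφ : smoothFn φ) (hF : smoothFn F)
    (hugly : ∀ T R a b, 0 < R → Real.sin a ≠ 0 →
      box φ T R a b = (2 / R) * dT φ T R a b + F T R a b) :
    ∀ T R a b, 0 < R → Real.sin a ≠ 0 →
      box (fun T' R' a' b' => R' * (dT φ T' R' a' b' - dR φ T' R' a' b')) T R a b
        = (1 / R) * (dT (fun T' R' a' b' => R' ^ 2 * F T' R' a' b') T R a b
            - dR (fun T' R' a' b' => R' ^ 2 * F T' R' a' b') T R a b) := by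
  intro T R a b hR ha
  have hR0 : R ≠ 0 := ne_of_gt hR
  have sT := smooth_dT hφ
  have sR := smooth_dR hφ
  have sg : smoothFn (fun T R a b => dT φ T R a b - dR φ T R a b) := smooth_sub sT sR
  have cTR : dT (dR φ) = dR (dT φ) := dT_dR_comm' hφ
  -- LHS expansion
  have eL : box (fun T' R' a' b' => R' * (dT φ T' R' a' b' - dR φ T' R' a' b')) T R a b
      = -(R * dT (dT (fun T R a b => dT φ T R a b - dR φ T R a b)) T R a b)
        + (2 * dR (fun T R a b => dT φ T R a b - dR φ T R a b) T R a b
            + R * dR (dR (fun T R a b => dT φ T R a b - dR φ T R a b)) T R a b)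
        + (2 / R) * ((dT φ T R a b - dR φ T R a b)
            + R * dR (fun T R a b => dT φ T R a b - dR φ T R a b) T R a b)
        + (R ^ 2)⁻¹ * (R * lapS2 (fun T R a b => dT φ T R a b - dR φ T R a b) T R a b) :=
    box_rescale sg T R a b
  have e1 : dT (dT (fun T R a b => dT φ T R a b - dR φ T R a b)) T R a b
      = dT (dT (dT φ)) T R a b - dR (dT (dT φ)) T R a b := by
    have hfun : (fun s => dT (fun T R a b => dT φ T R a b - dR φ T R a b) s R a b)
        = fun s => dT (dT φ) s R a b - dR (dT φ) s R a b := by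
      funext s; rw [dT_sub sT sR, cTR]
    show deriv _ T = _
    rw [hfun, ((sliceT (smooth_dT sT) T R a b).fun_sub (sliceT (smooth_dR sT) T R a b)).deriv,
      dT_dR_comm sT]
  have e2 : dR (fun T R a b => dT φ T R a b - dR φ T R a b) T R a b
      = dR (dT φ) T R a b - dR (dR φ) T R a b := dR_sub sT sR T R a b
  have e3 : dR (dR (fun T R a b => dT φ T R a b - dR φ T R a b)) T R a b
      = dR (dR (dT φ)) T R a b - dR (dR (dR φ)) T R a b := by
    have hfun : (fun s => dR (fun T R a b => dT φ T R a b - dR φ T R a b) T s a b)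
        = fun s => dR (dT φ) T s a b - dR (dR φ) T s a b :=
      funext fun s => dR_sub sT sR T s a b
    show deriv _ R = _
    rw [hfun, ((sliceR (smooth_dR sT) T R a b).fun_sub (sliceR (smooth_dR sR) T R a b)).deriv]
  have e4 : lapS2 (fun T R a b => dT φ T R a b - dR φ T R a b) T R a b
      = lapS2 (dT φ) T R a b - lapS2 (dR φ) T R a b := lapS2_sub sT sR T R a b
  -- RHS expansion
  have eR1 : dT (fun T' R' a' b' => R' ^ 2 * F T' R' a' b') T R a b
      = R ^ 2 * dT F T R a b := by
    show deriv (fun s => R ^ 2 * F s R a b) T = _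
    rw [deriv_const_mul_field]; rfl
  have eR2 : dR (fun T' R' a' b' => R' ^ 2 * F T' R' a' b') T R a b
      = 2 * R * F T R a b + R ^ 2 * dR F T R a b := by
    have h' : HasDerivAt (fun s => s ^ 2 * F T s a b)
        (((2 : ℕ) : ℝ) * R ^ 1 * F T R a b + R ^ 2 * dR F T R a b) R :=
      (hasDerivAt_pow 2 R).mul (sliceR hF T R a b)
    show deriv _ R = _
    rw [h'.deriv]; push_cast; ring
  -- hypothesis at the point
  have H0 := hugly T R a b hR ha
  simp only [box] at H0
  -- T-derivative of the hypothesis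
  have hfunT : (fun s => box φ s R a b) = fun s => 2 / R * dT φ s R a b + F s R a b :=
    funext fun s => hugly s R a b hR ha
  have hL : HasDerivAt (fun s => box φ s R a b)
      (-(dT (dT (dT φ)) T R a b) + dT (dR (dR φ)) T R a b
        + 2 / R * dT (dR φ) T R a b + (R ^ 2)⁻¹ * lapS2 (dT φ) T R a b) T :=
    (((sliceT (smooth_dT sT) T R a b).neg.add (sliceT (smooth_dR sR) T R a b)).add
        ((sliceT sR T R a b).const_mul (2 / R))).add
      ((lap_sliceT hφ T R a b).const_mul ((R ^ 2)⁻¹))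
  have hRt : HasDerivAt (fun s => 2 / R * dT φ s R a b + F s R a b)
      (2 / R * dT (dT φ) T R a b + dT F T R a b) T :=
    ((sliceT sT T R a b).const_mul (2 / R)).add (sliceT hF T R a b)
  have HT : -(dT (dT (dT φ)) T R a b) + dT (dR (dR φ)) T R a b
        + 2 / R * dT (dR φ) T R a b + (R ^ 2)⁻¹ * lapS2 (dT φ) T R a b
      = 2 / R * dT (dT φ) T R a b + dT F T R a b := by
    have h := congrArg (fun u => deriv u T) hfunT
    rw [hL.deriv, hRt.deriv] at h
    exact h
  rw [dT_dR_comm sR, cTR] at HT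
  -- R-derivative of the hypothesis
  have hev : (fun s => box φ T s a b) =ᶠ[nhds R] fun s => 2 / s * dT φ T s a b + F T s a b :=
    (eventually_gt_nhds hR).mono fun s hs => hugly T s a b hs ha
  have h2s : HasDerivAt (fun s : ℝ => 2 / s) ((0 * R - 2 * 1) / R ^ 2) R :=
    (hasDerivAt_const R (2 : ℝ)).div (hasDerivAt_id R) hR0
  have hinv : HasDerivAt (fun s : ℝ => (s ^ 2)⁻¹) (-(((2 : ℕ) : ℝ) * R ^ 1) / (R ^ 2) ^ 2) R :=
    (hasDerivAt_pow 2 R).inv (pow_ne_zero 2 hR0)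
  have hLr : HasDerivAt (fun s => box φ T s a b)
      (-(dR (dT (dT φ)) T R a b) + dR (dR (dR φ)) T R a b
        + ((0 * R - 2 * 1) / R ^ 2 * dR φ T R a b + 2 / R * dR (dR φ) T R a b)
        + (-(((2 : ℕ) : ℝ) * R ^ 1) / (R ^ 2) ^ 2 * lapS2 φ T R a b
            + (R ^ 2)⁻¹ * lapS2 (dR φ) T R a b)) R :=
    (((sliceR (smooth_dT sT) T R a b).neg.add (sliceR (smooth_dR sR) T R a b)).add
        (h2s.mul (sliceR sR T R a b))).add (hinv.mul (lap_sliceR hφ T R a b))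
  have hRr : HasDerivAt (fun s => 2 / s * dT φ T s a b + F T s a b)
      ((0 * R - 2 * 1) / R ^ 2 * dT φ T R a b + 2 / R * dR (dT φ) T R a b
        + dR F T R a b) R :=
    (h2s.mul (sliceR sT T R a b)).add (sliceR hF T R a b)
  have HR : -(dR (dT (dT φ)) T R a b) + dR (dR (dR φ)) T R a b
        + ((0 * R - 2 * 1) / R ^ 2 * dR φ T R a b + 2 / R * dR (dR φ) T R a b)
        + (-(((2 : ℕ) : ℝ) * R ^ 1) / (R ^ 2) ^ 2 * lapS2 φ T R a b
            + (R ^ 2)⁻¹ * lapS2 (dR φ) T R a b)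
      = (0 * R - 2 * 1) / R ^ 2 * dT φ T R a b + 2 / R * dR (dT φ) T R a b
          + dR F T R a b := by
    have h := hev.deriv_eq
    rw [hLr.deriv, hRr.deriv] at h
    exact h
  rw [eL, e1, e2, e3, e4, eR1, eR2]
  field_simp at H0 HT HR ⊢
  have HRsmall : R ^ 4 * (-(dR (dT (dT φ)) T R a b) + dR (dR (dR φ)) T R a b)
      - 2 * R ^ 2 * dR φ T R a b + 2 * R ^ 3 * dR (dR φ) T R a b
      - 2 * R * lapS2 φ T R a b + R ^ 2 * lapS2 (dR φ) T R a b
      = -2 * R ^ 2 * dT φ T R a b + 2 * R ^ 3 * dR (dT φ) T R a b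
        + R ^ 4 * dR F T R a b := by
    apply mul_left_cancel₀ (pow_ne_zero 8 hR0)
    linear_combination R ^ 9 * HR
  apply mul_left_cancel₀ (pow_ne_zero 2 hR0)
  linear_combination R ^ 2 * HT - HRsmall - 2 * R * H0
end
end

section
/- If φ satisfies □φ = (2/R)∂_T φ with vanishing source, then R(∂_T - ∂_R)φ satisfies the homogeneous wave equation □(R(∂_T - ∂_R)φ) = 0. -/
/-!
STATEMENT 1: If `φ` satisfies `□φ = (2/R)∂_T φ` (the ugly equation with `p = 1`
and vanishing source), then `R(∂_T - ∂_R)φ` satisfies the homogeneous wave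
equation `□(R(∂_T - ∂_R)φ) = 0`, for `R > 0` (and `sin θ ≠ 0`).
-/

noncomputable section

open ContDiff

abbrev E4 : Type := ℝ × ℝ × ℝ × ℝ

def unc (f : ℝ → ℝ → ℝ → ℝ → ℝ) : E4 → ℝ := fun q => f q.1 q.2.1 q.2.2.1 q.2.2.2

def sm (f : ℝ → ℝ → ℝ → ℝ → ℝ) : Prop := ContDiff ℝ ∞ (unc f)

lemma one_le_inf : (1 : WithTop ℕ∞) ≤ ∞ := by exact_mod_cast le_top

lemma sm.diff {f : ℝ → ℝ → ℝ → ℝ → ℝ} (hf : sm f) : Differentiable ℝ (unc f) :=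
  hf.differentiable (by simp)

lemma sliceT {f : ℝ → ℝ → ℝ → ℝ → ℝ} (hf : sm f) (T R a b : ℝ) :
    HasDerivAt (fun s => f s R a b) (fderiv ℝ (unc f) (T, R, a, b) (1, 0, 0, 0)) T := by
  have h : HasDerivAt (fun s : ℝ => ((s, R, a, b) : E4)) ((1 : ℝ), ((0 : ℝ), (0 : ℝ), (0 : ℝ))) T :=
    (hasDerivAt_id T).prodMk (hasDerivAt_const T ((R, a, b) : ℝ × ℝ × ℝ))
  exact (hf.diff (T, R, a, b)).hasFDerivAt.comp_hasDerivAt T h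

lemma sliceR {f : ℝ → ℝ → ℝ → ℝ → ℝ} (hf : sm f) (T R a b : ℝ) :
    HasDerivAt (fun s => f T s a b) (fderiv ℝ (unc f) (T, R, a, b) (0, 1, 0, 0)) R := by
  have h : HasDerivAt (fun s : ℝ => ((T, s, a, b) : E4)) ((0 : ℝ), ((1 : ℝ), (0 : ℝ), (0 : ℝ))) R :=
    (hasDerivAt_const R T).prodMk ((hasDerivAt_id R).prodMk (hasDerivAt_const R ((a, b) : ℝ × ℝ)))
  exact (hf.diff (T, R, a, b)).hasFDerivAt.comp_hasDerivAt R h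

lemma sliceA {f : ℝ → ℝ → ℝ → ℝ → ℝ} (hf : sm f) (T R a b : ℝ) :
    HasDerivAt (fun s => f T R s b) (fderiv ℝ (unc f) (T, R, a, b) (0, 0, 1, 0)) a := by
  have h : HasDerivAt (fun s : ℝ => ((T, R, s, b) : E4)) ((0 : ℝ), ((0 : ℝ), (1 : ℝ), (0 : ℝ))) a :=
    (hasDerivAt_const a T).prodMk ((hasDerivAt_const a R).prodMk
      ((hasDerivAt_id a).prodMk (hasDerivAt_const a b)))
  exact (hf.diff (T, R, a, b)).hasFDerivAt.comp_hasDerivAt a h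

lemma sliceB {f : ℝ → ℝ → ℝ → ℝ → ℝ} (hf : sm f) (T R a b : ℝ) :
    HasDerivAt (fun s => f T R a s) (fderiv ℝ (unc f) (T, R, a, b) (0, 0, 0, 1)) b := by
  have h : HasDerivAt (fun s : ℝ => ((T, R, a, s) : E4)) ((0 : ℝ), ((0 : ℝ), (0 : ℝ), (1 : ℝ))) b :=
    (hasDerivAt_const b T).prodMk ((hasDerivAt_const b R).prodMk
      ((hasDerivAt_const b a).prodMk (hasDerivAt_id b)))
  exact (hf.diff (T, R, a, b)).hasFDerivAt.comp_hasDerivAt b h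

lemma hderivT {f : ℝ → ℝ → ℝ → ℝ → ℝ} (hf : sm f) (T R a b : ℝ) :
    HasDerivAt (fun s => f s R a b) (dT f T R a b) T :=
  (sliceT hf T R a b).differentiableAt.hasDerivAt

lemma hderivR {f : ℝ → ℝ → ℝ → ℝ → ℝ} (hf : sm f) (T R a b : ℝ) :
    HasDerivAt (fun s => f T s a b) (dR f T R a b) R :=
  (sliceR hf T R a b).differentiableAt.hasDerivAt

lemma hderivA {f : ℝ → ℝ → ℝ → ℝ → ℝ} (hf : sm f) (T R a b : ℝ) :
    HasDerivAt (fun s => f T R s b) (dA f T R a b) a :=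
  (sliceA hf T R a b).differentiableAt.hasDerivAt

lemma hderivB {f : ℝ → ℝ → ℝ → ℝ → ℝ} (hf : sm f) (T R a b : ℝ) :
    HasDerivAt (fun s => f T R a s) (dB f T R a b) b :=
  (sliceB hf T R a b).differentiableAt.hasDerivAt

lemma dT_fderiv {f : ℝ → ℝ → ℝ → ℝ → ℝ} (hf : sm f) :
    unc (dT f) = fun q => fderiv ℝ (unc f) q (1, 0, 0, 0) := by
  funext q; obtain ⟨T, R, a, b⟩ := q; exact (sliceT hf T R a b).deriv

lemma dR_fderiv {f : ℝ → ℝ → ℝ → ℝ → ℝ} (hf : sm f) :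
    unc (dR f) = fun q => fderiv ℝ (unc f) q (0, 1, 0, 0) := by
  funext q; obtain ⟨T, R, a, b⟩ := q; exact (sliceR hf T R a b).deriv

lemma dA_fderiv {f : ℝ → ℝ → ℝ → ℝ → ℝ} (hf : sm f) :
    unc (dA f) = fun q => fderiv ℝ (unc f) q (0, 0, 1, 0) := by
  funext q; obtain ⟨T, R, a, b⟩ := q; exact (sliceA hf T R a b).deriv

lemma dB_fderiv {f : ℝ → ℝ → ℝ → ℝ → ℝ} (hf : sm f) :
    unc (dB f) = fun q => fderiv ℝ (unc f) q (0, 0, 0, 1) := by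
  funext q; obtain ⟨T, R, a, b⟩ := q; exact (sliceB hf T R a b).deriv

lemma inf_add_one : (∞ : WithTop ℕ∞) + 1 ≤ ∞ := le_of_eq rfl

lemma sm_dT {f : ℝ → ℝ → ℝ → ℝ → ℝ} (hf : sm f) : sm (dT f) := by
  rw [sm, dT_fderiv hf]
  exact (hf.fderiv_right inf_add_one).clm_apply contDiff_const

lemma sm_dR {f : ℝ → ℝ → ℝ → ℝ → ℝ} (hf : sm f) : sm (dR f) := by
  rw [sm, dR_fderiv hf]
  exact (hf.fderiv_right inf_add_one).clm_apply contDiff_const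

lemma sm_dA {f : ℝ → ℝ → ℝ → ℝ → ℝ} (hf : sm f) : sm (dA f) := by
  rw [sm, dA_fderiv hf]
  exact (hf.fderiv_right inf_add_one).clm_apply contDiff_const

lemma sm_dB {f : ℝ → ℝ → ℝ → ℝ → ℝ} (hf : sm f) : sm (dB f) := by
  rw [sm, dB_fderiv hf]
  exact (hf.fderiv_right inf_add_one).clm_apply contDiff_const

lemma pT {f : ℝ → ℝ → ℝ → ℝ → ℝ} (hf : sm f) (T R a b : ℝ) :
    dT f T R a b = fderiv ℝ (unc f) (T, R, a, b) (1, 0, 0, 0) := (sliceT hf T R a b).deriv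

lemma pR {f : ℝ → ℝ → ℝ → ℝ → ℝ} (hf : sm f) (T R a b : ℝ) :
    dR f T R a b = fderiv ℝ (unc f) (T, R, a, b) (0, 1, 0, 0) := (sliceR hf T R a b).deriv

lemma pA {f : ℝ → ℝ → ℝ → ℝ → ℝ} (hf : sm f) (T R a b : ℝ) :
    dA f T R a b = fderiv ℝ (unc f) (T, R, a, b) (0, 0, 1, 0) := (sliceA hf T R a b).deriv

lemma pB {f : ℝ → ℝ → ℝ → ℝ → ℝ} (hf : sm f) (T R a b : ℝ) :
    dB f T R a b = fderiv ℝ (unc f) (T, R, a, b) (0, 0, 0, 1) := (sliceB hf T R a b).deriv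

lemma fderiv_apply_const {g : E4 → E4 →L[ℝ] ℝ} {q : E4} (hg : DifferentiableAt ℝ g q)
    (v w : E4) : fderiv ℝ (fun p => g p w) q v = fderiv ℝ g q v w := by
  rw [fderiv_clm_apply hg (differentiableAt_const w)]
  simp

lemma comm_pt {f : ℝ → ℝ → ℝ → ℝ → ℝ} (hf : sm f) (q v w : E4) :
    fderiv ℝ (fun p => fderiv ℝ (unc f) p w) q v
      = fderiv ℝ (fun p => fderiv ℝ (unc f) p v) q w := by
  have hd : DifferentiableAt ℝ (fderiv ℝ (unc f)) q :=
    ((hf.fderiv_right inf_add_one).differentiable (by simp)) q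
  rw [fderiv_apply_const hd, fderiv_apply_const hd]
  exact (hf.contDiffAt.isSymmSndFDerivAt (by simp; decide)) v w

lemma comm_RT {f : ℝ → ℝ → ℝ → ℝ → ℝ} (hf : sm f) : dR (dT f) = dT (dR f) := by
  funext T R a b
  rw [pR (sm_dT hf), dT_fderiv hf, pT (sm_dR hf), dR_fderiv hf, comm_pt hf]

lemma comm_AT {f : ℝ → ℝ → ℝ → ℝ → ℝ} (hf : sm f) : dA (dT f) = dT (dA f) := by
  funext T R a b
  rw [pA (sm_dT hf), dT_fderiv hf, pT (sm_dA hf), dA_fderiv hf, comm_pt hf]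

lemma comm_AR {f : ℝ → ℝ → ℝ → ℝ → ℝ} (hf : sm f) : dA (dR f) = dR (dA f) := by
  funext T R a b
  rw [pA (sm_dR hf), dR_fderiv hf, pR (sm_dA hf), dA_fderiv hf, comm_pt hf]

lemma comm_BT {f : ℝ → ℝ → ℝ → ℝ → ℝ} (hf : sm f) : dB (dT f) = dT (dB f) := by
  funext T R a b
  rw [pB (sm_dT hf), dT_fderiv hf, pT (sm_dB hf), dB_fderiv hf, comm_pt hf]

lemma comm_BR {f : ℝ → ℝ → ℝ → ℝ → ℝ} (hf : sm f) : dB (dR f) = dR (dB f) := by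
  funext T R a b
  rw [pB (sm_dR hf), dR_fderiv hf, pR (sm_dB hf), dB_fderiv hf, comm_pt hf]

lemma dT_sub {f g : ℝ → ℝ → ℝ → ℝ → ℝ} (hf : sm f) (hg : sm g) :
    dT (fun T R a b => f T R a b - g T R a b)
      = fun T R a b => dT f T R a b - dT g T R a b := by
  funext T R a b
  exact ((hderivT hf T R a b).sub (hderivT hg T R a b)).deriv

lemma dR_sub {f g : ℝ → ℝ → ℝ → ℝ → ℝ} (hf : sm f) (hg : sm g) :
    dR (fun T R a b => f T R a b - g T R a b)
      = fun T R a b => dR f T R a b - dR g T R a b := by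
  funext T R a b
  exact ((hderivR hf T R a b).sub (hderivR hg T R a b)).deriv

lemma dA_sub {f g : ℝ → ℝ → ℝ → ℝ → ℝ} (hf : sm f) (hg : sm g) :
    dA (fun T R a b => f T R a b - g T R a b)
      = fun T R a b => dA f T R a b - dA g T R a b := by
  funext T R a b
  exact ((hderivA hf T R a b).sub (hderivA hg T R a b)).deriv

lemma dB_sub {f g : ℝ → ℝ → ℝ → ℝ → ℝ} (hf : sm f) (hg : sm g) :
    dB (fun T R a b => f T R a b - g T R a b)
      = fun T R a b => dB f T R a b - dB g T R a b := by
  funext T R a b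
  exact ((hderivB hf T R a b).sub (hderivB hg T R a b)).deriv

lemma dT_Rmul {g : ℝ → ℝ → ℝ → ℝ → ℝ} (hg : sm g) :
    dT (fun T R a b => R * g T R a b) = fun T R a b => R * dT g T R a b := by
  funext T R a b
  exact ((hderivT hg T R a b).const_mul R).deriv

lemma dA_Rmul {g : ℝ → ℝ → ℝ → ℝ → ℝ} (hg : sm g) :
    dA (fun T R a b => R * g T R a b) = fun T R a b => R * dA g T R a b := by
  funext T R a b
  exact ((hderivA hg T R a b).const_mul R).deriv

lemma dB_Rmul {g : ℝ → ℝ → ℝ → ℝ → ℝ} (hg : sm g) :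
    dB (fun T R a b => R * g T R a b) = fun T R a b => R * dB g T R a b := by
  funext T R a b
  exact ((hderivB hg T R a b).const_mul R).deriv

lemma dR_Rmul {g : ℝ → ℝ → ℝ → ℝ → ℝ} (hg : sm g) :
    dR (fun T R a b => R * g T R a b)
      = fun T R a b => g T R a b + R * dR g T R a b := by
  funext T R a b
  have h : HasDerivAt (fun s => s * g T s a b) (g T R a b + R * dR g T R a b) R := by
    exact ((hasDerivAt_id R).mul (hderivR hg T R a b)).congr_deriv (by simp)
  exact h.deriv

lemma dR_uRmul {f g : ℝ → ℝ → ℝ → ℝ → ℝ} (hf : sm f) (hg : sm g) :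
    dR (fun T R a b => f T R a b + R * dR g T R a b)
      = fun T R a b => dR f T R a b + (dR g T R a b + R * dR (dR g) T R a b) := by
  funext T R a b
  have h : HasDerivAt (fun s => f T s a b + s * dR g T s a b)
      (dR f T R a b + (dR g T R a b + R * dR (dR g) T R a b)) R := by
    exact ((hderivR hf T R a b).add ((hasDerivAt_id R).mul (hderivR (sm_dR hg) T R a b))).congr_deriv (by simp)
  exact h.deriv

lemma sm_sub {f g : ℝ → ℝ → ℝ → ℝ → ℝ} (hf : sm f) (hg : sm g) :
    sm (fun T R a b => f T R a b - g T R a b) := hf.sub hg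

lemma sm_Rmul {g : ℝ → ℝ → ℝ → ℝ → ℝ} (hg : sm g) :
    sm (fun T R a b => R * g T R a b) := by
  exact (contDiff_fst.comp contDiff_snd).mul hg


def uu (φ : ℝ → ℝ → ℝ → ℝ → ℝ) : ℝ → ℝ → ℝ → ℝ → ℝ :=
  fun T R a b => dT φ T R a b - dR φ T R a b

theorem ugly_sourcefree_gives_good (φ : ℝ → ℝ → ℝ → ℝ → ℝ) (hφ : smoothFn φ)
    (hugly : ∀ T R a b, 0 < R → Real.sin a ≠ 0 →
      box φ T R a b = (2 / R) * dT φ T R a b) :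
    ∀ T R a b, 0 < R → Real.sin a ≠ 0 →
      box (fun T' R' a' b' => R' * (dT φ T' R' a' b' - dR φ T' R' a' b')) T R a b = 0 := by
  intro T R a b hRpos hsa
  have hφ' : sm φ := hφ.of_le (by simp)
  have hR0 : R ≠ 0 := ne_of_gt hRpos
  have hT1 : sm (dT φ) := sm_dT hφ'
  have hR1 : sm (dR φ) := sm_dR hφ'
  have hA1 : sm (dA φ) := sm_dA hφ'
  have hB1 : sm (dB φ) := sm_dB hφ'
  have hu : sm (uu φ) := sm_sub hT1 hR1
  have hpsi : (fun T' R' a' b' => R' * (dT φ T' R' a' b' - dR φ T' R' a' b'))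
      = (fun T R a b => R * uu φ T R a b) := rfl
  rw [hpsi]
  -- hypothesis at the point
  have h0 := hugly T R a b hRpos hsa
  simp only [box, lapS2] at h0 ⊢
  -- derivative of the hypothesis in T
  have HT1 : HasDerivAt (fun s => box φ s R a b)
      (-dT (dT (dT φ)) T R a b + dT (dR (dR φ)) T R a b + 2 / R * dT (dR φ) T R a b
        + (R ^ 2)⁻¹ * (dT (dA (dA φ)) T R a b
          + Real.cos a / Real.sin a * dT (dA φ) T R a b
          + (Real.sin a ^ 2)⁻¹ * dT (dB (dB φ)) T R a b)) T := by
    exact (((hderivT (sm_dT hT1) T R a b).neg.add (hderivT (sm_dR hR1) T R a b)).add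
        ((hderivT hR1 T R a b).const_mul (2 / R))).add
      ((((hderivT (sm_dA hA1) T R a b).add
          ((hderivT hA1 T R a b).const_mul (Real.cos a / Real.sin a))).add
        ((hderivT (sm_dB hB1) T R a b).const_mul ((Real.sin a ^ 2)⁻¹))).const_mul ((R ^ 2)⁻¹))
  have HT2 : HasDerivAt (fun s => 2 / R * dT φ s R a b) (2 / R * dT (dT φ) T R a b) T :=
    (hderivT hT1 T R a b).const_mul (2 / R)
  have eT' : (fun s => box φ s R a b) = fun s => 2 / R * dT φ s R a b :=
    funext fun s => hugly s R a b hRpos hsa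
  have hTE := (eT' ▸ HT1).unique HT2
  -- derivative of the hypothesis in R
  have hne : R ^ 2 ≠ 0 := pow_ne_zero 2 hR0
  have Hinv : HasDerivAt (fun s : ℝ => (s ^ 2)⁻¹) (-(2 * R) / (R ^ 2) ^ 2) R := by
    have := (hasDerivAt_pow 2 R).inv hne
    exact this.congr_deriv (by norm_num)
  have H2s : HasDerivAt (fun s : ℝ => 2 / s) (-(2 / R ^ 2)) R := by
    have := (hasDerivAt_inv hR0).const_mul (2 : ℝ)
    simpa [div_eq_mul_inv, mul_comm] using this
  have HR1 : HasDerivAt (fun s => box φ T s a b)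
      (-dR (dT (dT φ)) T R a b + dR (dR (dR φ)) T R a b
        + (-(2 / R ^ 2) * dR φ T R a b + 2 / R * dR (dR φ) T R a b)
        + (-(2 * R) / (R ^ 2) ^ 2 * (dA (dA φ) T R a b
            + Real.cos a / Real.sin a * dA φ T R a b
            + (Real.sin a ^ 2)⁻¹ * dB (dB φ) T R a b)
          + (R ^ 2)⁻¹ * (dR (dA (dA φ)) T R a b
            + Real.cos a / Real.sin a * dR (dA φ) T R a b
            + (Real.sin a ^ 2)⁻¹ * dR (dB (dB φ)) T R a b))) R := by
    exact (((hderivR (sm_dT hT1) T R a b).neg.add (hderivR (sm_dR hR1) T R a b)).add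
        (H2s.mul (hderivR hR1 T R a b))).add
      (Hinv.mul ((((hderivR (sm_dA hA1) T R a b).add
          ((hderivR hA1 T R a b).const_mul (Real.cos a / Real.sin a))).add
        ((hderivR (sm_dB hB1) T R a b).const_mul ((Real.sin a ^ 2)⁻¹)))))
  have HR2 : HasDerivAt (fun s => 2 / s * dT φ T s a b)
      (-(2 / R ^ 2) * dT φ T R a b + 2 / R * dR (dT φ) T R a b) R :=
    H2s.mul (hderivR hT1 T R a b)
  have eR' : (fun s => box φ T s a b) =ᶠ[nhds R] (fun s => 2 / s * dT φ T s a b) := by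
    filter_upwards [isOpen_Ioi.mem_nhds hRpos] with s hs
    exact hugly T s a b hs hsa
  have hRE := HR1.unique (HR2.congr_of_eventuallyEq eR')
  -- normalize mixed partial derivatives
  simp only [comm_RT hT1, comm_RT hφ', comm_AT hφ', comm_AT hA1, comm_AR hφ', comm_AR hA1,
    comm_BT hφ', comm_BT hB1, comm_BR hφ', comm_BR hB1] at hRE
  -- expand the wave operator applied to R * uu
  rw [dT_Rmul hu, dT_Rmul (sm_dT hu), dR_Rmul hu, dR_uRmul hu hu,
    dA_Rmul hu, dA_Rmul (sm_dA hu), dB_Rmul hu, dB_Rmul (sm_dB hu)]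
  simp only []
  rw [show uu φ = fun T R a b => dT φ T R a b - dR φ T R a b from rfl,
    dT_sub hT1 hR1, dR_sub hT1 hR1, dA_sub hT1 hR1, dB_sub hT1 hR1,
    dT_sub (sm_dT hT1) (sm_dT hR1), dR_sub (sm_dR hT1) (sm_dR hR1),
    dA_sub (sm_dA hT1) (sm_dA hR1), dB_sub (sm_dB hT1) (sm_dB hR1)]
  simp only [comm_RT hT1, comm_RT hR1, comm_RT hφ', comm_AT hφ', comm_AT hA1, comm_AR hφ',
    comm_AR hA1, comm_BT hφ', comm_BT hB1, comm_BR hφ', comm_BR hB1]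
  have hiv : R * R⁻¹ = 1 := mul_inv_cancel₀ hR0
  linear_combination (R : ℝ) * hTE - R * hRE - 2 * h0 +
    (2 * dT (dT φ) T R a b - 2 * dT (dR φ) T R a b + 2 * R⁻¹ * dT φ T R a b
      - 2 * R⁻¹ * dR φ T R a b
      - 2 * (R ^ 2)⁻¹ * (R * R⁻¹ + 1) * (dA (dA φ) T R a b
          + Real.cos a / Real.sin a * dA φ T R a b
          + (Real.sin a ^ 2)⁻¹ * dB (dB φ) T R a b)) * hiv
end
end

section
/- The matrix D = R^{-2}·diag(1/2, 1/(2R²), g̸^{AB}) is positive definite (for R > 0 and g̸^{AB} the inverse round metric on the sphere of radius R), and the product D M is symmetric, where M is the principal-part matrix M^R = [[−1, 0, g̸^{RA}-row], [0, 1, R g̸-row], [(1/2)row, (1/(2R))row, 0]] of the first-order reduction of the ugly equation given in the paper. -/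
/-!
STATEMENT 13: The matrix `D = R⁻² diag(1/2, 1/(2R²), g̸^{AB})` (with `g̸^{AB}`
the inverse round metric on the sphere of radius `R`) is positive definite for
`R > 0`, and `D Mᵖ` is symmetric for each spatial principal matrix `Mᵖ` of the
first-order reduction of the ugly equation, in the variable ordering
`(Φ_ψ̱, Φ_ψ, Φ_θ, Φ_φ)`: the radial block `M^R = diag(−1, 1, 0, 0)` and the
angular blocks with entries `g̸^{pA}`, `R g̸^{pA}`, `(1/2)g̸_A{}^p`,
`(1/(2R))g̸_A{}^p`.
-/

open Matrix

noncomputable section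

set_option maxHeartbeats 2000000 in
theorem symmetrizer_works (R θ : ℝ) (hR : 0 < R) (hθ : Real.sin θ ≠ 0) :
    (((R ^ 2)⁻¹ • !![1/2, 0, 0, 0; 0, (2 * R ^ 2)⁻¹, 0, 0; 0, 0, (R ^ 2)⁻¹, 0;
        0, 0, 0, (R ^ 2 * Real.sin θ ^ 2)⁻¹] : Matrix (Fin 4) (Fin 4) ℝ)).PosDef ∧
    ((((R ^ 2)⁻¹ • !![1/2, 0, 0, 0; 0, (2 * R ^ 2)⁻¹, 0, 0; 0, 0, (R ^ 2)⁻¹, 0;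
        0, 0, 0, (R ^ 2 * Real.sin θ ^ 2)⁻¹] : Matrix (Fin 4) (Fin 4) ℝ)) *
      !![-1, 0, 0, 0; 0, 1, 0, 0; 0, 0, 0, 0; 0, 0, 0, 0]).IsSymm ∧
    ((((R ^ 2)⁻¹ • !![1/2, 0, 0, 0; 0, (2 * R ^ 2)⁻¹, 0, 0; 0, 0, (R ^ 2)⁻¹, 0;
        0, 0, 0, (R ^ 2 * Real.sin θ ^ 2)⁻¹] : Matrix (Fin 4) (Fin 4) ℝ)) *
      !![0, 0, (R ^ 2)⁻¹, 0; 0, 0, R * (R ^ 2)⁻¹, 0; 1/2, (2 * R)⁻¹, 0, 0;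
        0, 0, 0, 0]).IsSymm ∧
    ((((R ^ 2)⁻¹ • !![1/2, 0, 0, 0; 0, (2 * R ^ 2)⁻¹, 0, 0; 0, 0, (R ^ 2)⁻¹, 0;
        0, 0, 0, (R ^ 2 * Real.sin θ ^ 2)⁻¹] : Matrix (Fin 4) (Fin 4) ℝ)) *
      !![0, 0, 0, (R ^ 2 * Real.sin θ ^ 2)⁻¹; 0, 0, 0, R * (R ^ 2 * Real.sin θ ^ 2)⁻¹;
        0, 0, 0, 0; 1/2, (2 * R)⁻¹, 0, 0]).IsSymm := by
  have hR2 : (0:ℝ) < R ^ 2 := by positivity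
  have hs2 : (0:ℝ) < Real.sin θ ^ 2 := by positivity
  refine ⟨?_, ?_, ?_, ?_⟩
  · have hdiag : ((R ^ 2)⁻¹ • !![1/2, 0, 0, 0; 0, (2 * R ^ 2)⁻¹, 0, 0; 0, 0, (R ^ 2)⁻¹, 0;
        0, 0, 0, (R ^ 2 * Real.sin θ ^ 2)⁻¹] : Matrix (Fin 4) (Fin 4) ℝ) =
        Matrix.diagonal ![(R ^ 2)⁻¹ * (1/2), (R ^ 2)⁻¹ * (2 * R ^ 2)⁻¹,
          (R ^ 2)⁻¹ * (R ^ 2)⁻¹, (R ^ 2)⁻¹ * (R ^ 2 * Real.sin θ ^ 2)⁻¹] := by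
      ext i j
      fin_cases i <;> fin_cases j <;>
        simp [Matrix.diagonal, Matrix.vecHead, Matrix.vecTail, Function.comp]
    rw [hdiag, Matrix.posDef_diagonal_iff]
    intro i
    fin_cases i <;> simp <;> positivity
  · refine Matrix.IsSymm.ext fun i j => ?_
    fin_cases i <;> fin_cases j <;>
      simp [Matrix.mul_apply, Fin.sum_univ_four, Matrix.vecHead, Matrix.vecTail, Function.comp]
  · refine Matrix.IsSymm.ext fun i j => ?_
    fin_cases i <;> fin_cases j <;>
      simp [Matrix.mul_apply, Fin.sum_univ_four, Matrix.vecHead, Matrix.vecTail,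
        Function.comp] <;>
      field_simp <;> ring
  · refine Matrix.IsSymm.ext fun i j => ?_
    fin_cases i <;> fin_cases j <;>
      simp [Matrix.mul_apply, Fin.sum_univ_four, Matrix.vecHead, Matrix.vecTail,
        Function.comp] <;>
      field_simp <;> ring
end
end
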